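/- arXiv:2401.11072 — 4 statements merged into one kernel-verified Lean document; each statement's English description precedes it below -/
import Mathlib

section
/- Let k be an algebraically closed field of characteristic p > 0, and let A(n) = k[x_1,...,x_n]/(x_1^p,...,x_n^p) be the truncated polynomial ring. A k-algebra endomorphism φ of A(n) is an automorphism if and only if φ stabilizes the unique maximal ideal of A(n) and the determinant of the Jacobian matrix J(φ) = (∂_j φ(x_i)) is invertible in A(n). -/
/-!
Let `A = k[X]/I` with `I ⊆ (X)²` and nilpotent variables, and let `𝔪 = (x₁, …, xₙ)`, the kernel
of the augmentation `A → k`. Being generated by finitely many nilpotents, `𝔪` is nilpotent; hence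
it is the nilradical, `A` is finite-dimensional, every endomorphism `φ` stabilizes `𝔪`, and an
element of `A` is a unit iff its constant term is nonzero. So the Jacobian determinant is a unit
iff the Jacobian at the origin, the matrix `L` of linear coefficients of the `Pᵢ`, is invertible.
Modulo `𝔪²` we have `φ(xᵢ) ≡ ∑ⱼ Lᵢⱼ xⱼ`, and the `xⱼ` are linearly independent in `A/𝔪²` because
`I ⊆ (X)²`. If `φ` is surjective, writing `xᵢ = φ(aᵢ)` and expanding the `aᵢ` to first order gives
a left inverse of `L`. Conversely, if `L` is invertible then every element of `𝔪` agrees with an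
element of `φ(𝔪)` modulo `𝔪²`; multiplying such approximations, every element of `𝔪^q` agrees with
an element of `φ(𝔪^q)` modulo `𝔪^(q+1)`, so `φ` is surjective since `𝔪` is nilpotent, and
bijective since `A` is finite-dimensional.
-/

open MvPolynomial

namespace MvPolynomial

variable {R σ : Type*}

theorem constantCoeff_pderiv [CommSemiring R] (i : σ) (f : MvPolynomial σ R) :
    constantCoeff (pderiv i f) = coeff (Finsupp.single i 1) f := by
  simpa [constantCoeff_eq] using coeff_pderiv f 0 (i := i)

theorem mem_idealOfVars_iff [CommSemiring R] (f : MvPolynomial σ R) :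
    f ∈ idealOfVars σ R ↔ constantCoeff f = 0 := by
  simpa [Finsupp.degree_eq_zero_iff, constantCoeff_eq] using mem_pow_idealOfVars_iff' 1 f

theorem coeff_single_one_eq_zero_of_mem_idealOfVars_sq [CommSemiring R] {f : MvPolynomial σ R}
    (hf : f ∈ idealOfVars σ R ^ 2) (i : σ) : coeff (Finsupp.single i 1) f = 0 :=
  (mem_pow_idealOfVars_iff' 2 f).mp hf _ (by simp)

theorem sub_linear_mem_idealOfVars_sq [CommRing R] [Fintype σ] (f : MvPolynomial σ R) :
    f - C (constantCoeff f) - ∑ i, coeff (Finsupp.single i 1) f • (X i : MvPolynomial σ R) ∈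
      idealOfVars σ R ^ 2 := by
  classical
  refine (mem_pow_idealOfVars_iff' 2 _).mpr fun d hd => ?_
  obtain hd | hd : d.degree = 0 ∨ d.degree = 1 := by omega
  · obtain rfl := (Finsupp.degree_eq_zero_iff d).mp hd
    simp [coeff_sum, constantCoeff_eq]
  · obtain ⟨i, rfl⟩ := Finsupp.range_single_one.symm.subset hd
    simp [coeff_sum, coeff_X, Finsupp.single_left_inj one_ne_zero, eq_comm (a := (0 : σ →₀ ℕ))]

noncomputable def linearCoeffMatrix [CommSemiring R] (P : σ → MvPolynomial σ R) :
    Matrix σ σ R :=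
  Matrix.of fun i j => coeff (Finsupp.single j 1) (P i)

@[simp]
theorem linearCoeffMatrix_apply [CommSemiring R] (P : σ → MvPolynomial σ R) (i j : σ) :
    linearCoeffMatrix P i j = coeff (Finsupp.single j 1) (P i) :=
  rfl

end MvPolynomial

theorem Matrix.sum_smul_sum_smul {ι R M : Type*} [Fintype ι] [Semiring R] [AddCommMonoid M]
    [Module R M] (N L : Matrix ι ι R) (y : ι → M) (i : ι) :
    ∑ l, N i l • ∑ j, L l j • y j = ∑ j, (N * L) i j • y j := by
  simp only [Finset.smul_sum, smul_smul, Matrix.mul_apply, Finset.sum_smul]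
  exact Finset.sum_comm

section LiftsModPow

variable {A F : Type*} [CommRing A] [FunLike F A A] [RingHomClass F A A] (φ : F) (m : Ideal A)

def LiftsModPow (q : ℕ) (a : A) : Prop :=
  ∃ b ∈ m ^ q, a - φ b ∈ m ^ (q + 1)

variable {φ m}

theorem Ideal.mul_mem_pow_of_add_eq {i j n : ℕ} (h : i + j = n) {a b : A} (ha : a ∈ m ^ i)
    (hb : b ∈ m ^ j) : a * b ∈ m ^ n :=
  h ▸ pow_add m i j ▸ Ideal.mul_mem_mul ha hb

theorem Ideal.map_mem_pow_of_le_comap (hφ : m ≤ m.comap φ) {q : ℕ} {a : A} (ha : a ∈ m ^ q) :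
    φ a ∈ m ^ q :=
  Ideal.le_comap_pow _ q (Ideal.pow_right_mono hφ q ha)

theorem LiftsModPow.mem (hφ : m ≤ m.comap φ) {q : ℕ} {a : A} (h : LiftsModPow φ m q a) :
    a ∈ m ^ q := by
  obtain ⟨b, hb, hab⟩ := h
  simpa using add_mem (Ideal.pow_le_pow_right q.le_succ hab) (Ideal.map_mem_pow_of_le_comap hφ hb)

theorem LiftsModPow.add {q : ℕ} {a a' : A} (h : LiftsModPow φ m q a)
    (h' : LiftsModPow φ m q a') : LiftsModPow φ m q (a + a') := by
  obtain ⟨b, hb, hab⟩ := h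
  obtain ⟨b', hb', hab'⟩ := h'
  refine ⟨b + b', add_mem hb hb', ?_⟩
  rw [map_add, add_sub_add_comm]
  exact add_mem hab hab'

theorem LiftsModPow.mul (hφ : m ≤ m.comap φ) {q q' : ℕ} {a a' : A} (h : LiftsModPow φ m q a)
    (h' : LiftsModPow φ m q' a') : LiftsModPow φ m (q + q') (a * a') := by
  obtain ⟨b, hb, hab⟩ := h
  obtain ⟨b', hb', hab'⟩ := id h'
  refine ⟨b * b', Ideal.mul_mem_pow_of_add_eq rfl hb hb', ?_⟩
  have key : a * a' - φ (b * b') = (a - φ b) * a' + φ b * (a' - φ b') := by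
    rw [map_mul]
    ring
  rw [key]
  exact add_mem (Ideal.mul_mem_pow_of_add_eq (by omega) hab (h'.mem hφ))
    (Ideal.mul_mem_pow_of_add_eq (by omega) (Ideal.map_mem_pow_of_le_comap hφ hb) hab')

theorem liftsModPow_one_of_mem_span {s : Set A} (hφ : m ≤ m.comap φ)
    (h0 : ∀ a, LiftsModPow φ m 0 a) (hs : ∀ x ∈ s, LiftsModPow φ m 1 x)
    {a : A} (ha : a ∈ Ideal.span s) : LiftsModPow φ m 1 a := by
  induction ha using Submodule.span_induction with
  | mem x hx => exact hs x hx
  | zero => exact ⟨0, zero_mem _, by simp⟩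
  | add _ _ _ _ h h' => exact h.add h'
  | smul r _ _ h => simpa using (h0 r).mul hφ h

theorem liftsModPow_of_mem_pow (hφ : m ≤ m.comap φ) (h0 : ∀ a, LiftsModPow φ m 0 a)
    (h1 : ∀ a ∈ m, LiftsModPow φ m 1 a) (q : ℕ) {a : A} (ha : a ∈ m ^ q) :
    LiftsModPow φ m q a := by
  induction q generalizing a with
  | zero => exact h0 a
  | succ q ih =>
    rw [pow_succ] at ha
    exact Submodule.mul_induction_on ha (fun x hx y hy => (ih hx).mul hφ (h1 y hy))
      fun _ _ h h' => h.add h'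

theorem surjective_of_liftsModPow (hm : IsNilpotent m) (hφ : m ≤ m.comap φ)
    (h0 : ∀ a, LiftsModPow φ m 0 a) (h1 : ∀ a ∈ m, LiftsModPow φ m 1 a) :
    Function.Surjective φ := by
  obtain ⟨N, hN⟩ := hm
  have approx (q : ℕ) (a : A) : ∃ b, a - φ b ∈ m ^ q := by
    induction q generalizing a with
    | zero => exact ⟨0, by simp⟩
    | succ q ih =>
      obtain ⟨b, hb⟩ := ih a
      obtain ⟨c, -, hc⟩ := liftsModPow_of_mem_pow hφ h0 h1 q hb
      exact ⟨b + c, by rwa [map_add, ← sub_sub]⟩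
  intro a
  obtain ⟨b, hb⟩ := approx N a
  exact ⟨b, (sub_eq_zero.mp (by simpa [hN] using hb)).symm⟩

end LiftsModPow

namespace JacobianCriterion

variable {k σ : Type*} [Field k] {I : Ideal (MvPolynomial σ k)}

noncomputable def varsIdeal (I : Ideal (MvPolynomial σ k)) : Ideal (MvPolynomial σ k ⧸ I) :=
  Ideal.span (Set.range fun i => Ideal.Quotient.mk I (X i))

theorem varsIdeal_eq_map : varsIdeal I = (idealOfVars σ k).map (Ideal.Quotient.mk I) := by
  rw [varsIdeal, Ideal.map_span, ← Set.range_comp]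
  rfl

theorem mk_mem_varsIdeal_pow {q : ℕ} {f : MvPolynomial σ k} (hf : f ∈ idealOfVars σ k ^ q) :
    Ideal.Quotient.mk I f ∈ varsIdeal I ^ q := by
  rw [varsIdeal_eq_map, ← Ideal.map_pow]
  exact Ideal.mem_map_of_mem _ hf

theorem varsIdeal_fg [Finite σ] : (varsIdeal I).FG :=
  Submodule.fg_span (Set.finite_range _)

section Augmentation

variable (hI : I ≤ idealOfVars σ k)

noncomputable def augmentation : (MvPolynomial σ k ⧸ I) →ₐ[k] k :=
  Ideal.Quotient.liftₐ I (aeval 0) fun f hf => by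
    simpa using (mem_idealOfVars_iff f).mp (hI hf)

theorem augmentation_mk (f : MvPolynomial σ k) :
    augmentation hI (Ideal.Quotient.mk I f) = constantCoeff f := by
  simp [augmentation]

theorem ker_augmentation : RingHom.ker (augmentation hI) = varsIdeal I := by
  ext a
  obtain ⟨f, rfl⟩ := Ideal.Quotient.mk_surjective a
  refine ⟨fun hf => pow_one (varsIdeal I) ▸ mk_mem_varsIdeal_pow (q := 1) ?_, fun hf => ?_⟩
  · simpa [mem_idealOfVars_iff, augmentation_mk] using hf
  · refine (Ideal.span_le.mpr ?_ : varsIdeal I ≤ RingHom.ker (augmentation hI)) hf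
    rintro _ ⟨i, rfl⟩
    simp [augmentation_mk]

include hI in
theorem mk_mem_varsIdeal_iff {f : MvPolynomial σ k} :
    Ideal.Quotient.mk I f ∈ varsIdeal I ↔ constantCoeff f = 0 := by
  rw [← ker_augmentation hI, RingHom.mem_ker, augmentation_mk]

end Augmentation

section Nilpotent

variable (hnil : ∀ i, IsNilpotent (Ideal.Quotient.mk I (X i)))
include hnil

theorem varsIdeal_le_nilradical : varsIdeal I ≤ nilradical _ :=
  Ideal.span_le.mpr (Set.range_subset_iff.mpr hnil)

theorem isNilpotent_varsIdeal [Finite σ] : IsNilpotent (varsIdeal I) :=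
  varsIdeal_fg.isNilpotent_iff_le_nilradical.mpr (varsIdeal_le_nilradical hnil)

variable (hI : I ≤ idealOfVars σ k)
include hI

theorem isUnit_mk_iff {f : MvPolynomial σ k} :
    IsUnit (Ideal.Quotient.mk I f) ↔ constantCoeff f ≠ 0 := by
  refine ⟨fun hf => by simpa [augmentation_mk] using hf.map (augmentation hI), fun hf => ?_⟩
  have hsub : Ideal.Quotient.mk I f - algebraMap k _ (constantCoeff f) ∈ varsIdeal I := by
    rw [← ker_augmentation hI, RingHom.mem_ker]
    simp [augmentation_mk]
  simpa using (mem_nilradical.mp (varsIdeal_le_nilradical hnil hsub)).isUnit_add_right_of_commute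
    (hf.isUnit.map (algebraMap k _)) (Commute.all _ _)

theorem varsIdeal_le_comap (φ : (MvPolynomial σ k ⧸ I) →ₐ[k] (MvPolynomial σ k ⧸ I)) :
    varsIdeal I ≤ (varsIdeal I).comap φ := by
  intro a ha
  have : IsNilpotent (augmentation hI (φ a)) :=
    ((mem_nilradical.mp (varsIdeal_le_nilradical hnil ha)).map φ).map (augmentation hI)
  rw [Ideal.mem_comap, ← ker_augmentation hI, RingHom.mem_ker]
  exact this.eq_zero

theorem augmentation_comp (φ : (MvPolynomial σ k ⧸ I) →ₐ[k] (MvPolynomial σ k ⧸ I)) :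
    (augmentation hI).comp φ = augmentation hI := by
  refine Ideal.Quotient.algHom_ext k (algHom_ext fun i => ?_)
  have hx : Ideal.Quotient.mk I (X i) ∈ varsIdeal I := Ideal.subset_span ⟨i, rfl⟩
  have hφx := varsIdeal_le_comap hnil hI φ hx
  rw [← ker_augmentation hI] at hx hφx
  simp_all [RingHom.mem_ker]

theorem finite_quotient [Finite σ] : Module.Finite k (MvPolynomial σ k ⧸ I) :=
  Module.finite_of_surjective_of_ker_le_nilradical (augmentation hI)
    (fun c => ⟨algebraMap k _ c, by simp⟩)
    (ker_augmentation hI ▸ varsIdeal_le_nilradical hnil)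
    (ker_augmentation hI ▸ varsIdeal_fg)

theorem bijective_of_surjective [Finite σ]
    {φ : (MvPolynomial σ k ⧸ I) →ₐ[k] (MvPolynomial σ k ⧸ I)} (hφ : Function.Surjective φ) :
    Function.Bijective φ :=
  have := finite_quotient hnil hI
  ⟨(LinearMap.injective_iff_surjective (f := φ.toLinearMap)).mpr hφ, hφ⟩

end Nilpotent

section Cotangent

variable [Fintype σ]

theorem mkₐ_sq_mk_eq_sum {f : MvPolynomial σ k} (hf : constantCoeff f = 0) :
    Ideal.Quotient.mkₐ k (varsIdeal I ^ 2) (Ideal.Quotient.mk I f) =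
      ∑ j, coeff (Finsupp.single j 1) f •
        Ideal.Quotient.mkₐ k (varsIdeal I ^ 2) (Ideal.Quotient.mk I (X j)) := by
  have key := mk_mem_varsIdeal_pow (I := I) (sub_linear_mem_idealOfVars_sq f)
  rw [hf, map_zero, sub_zero, map_sub, ← Ideal.Quotient.mkₐ_eq_mk k I, map_sum] at key
  simp_rw [map_smul] at key
  rw [← sub_eq_zero]
  simp only [← map_smul, ← map_sum, ← map_sub]
  exact Ideal.Quotient.eq_zero_iff_mem.mpr key

theorem linearIndependent_mkₐ_sq (hI : I ≤ idealOfVars σ k ^ 2) :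
    LinearIndependent k fun j =>
      Ideal.Quotient.mkₐ k (varsIdeal I ^ 2) (Ideal.Quotient.mk I (X j)) := by
  classical
  refine Fintype.linearIndependent_iff.mpr fun g hg i => ?_
  simp only [← Ideal.Quotient.mkₐ_eq_mk k I, ← map_smul, ← map_sum] at hg
  rw [Ideal.Quotient.mkₐ_eq_mk, Ideal.Quotient.eq_zero_iff_mem, Ideal.Quotient.mkₐ_eq_mk,
    varsIdeal_eq_map, ← Ideal.map_pow,
    Ideal.mem_map_iff_of_surjective _ Ideal.Quotient.mk_surjective] at hg
  obtain ⟨G, hG, hGF⟩ := hg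
  have hF : ∑ j, g j • (X j : MvPolynomial σ k) ∈ idealOfVars σ k ^ 2 := by
    simpa using sub_mem hG (hI (Ideal.Quotient.eq.mp hGF))
  simpa [coeff_sum, coeff_X, Finsupp.single_left_inj one_ne_zero] using
    coeff_single_one_eq_zero_of_mem_idealOfVars_sq hF i

theorem mkₐ_sq_map_X (hI : I ≤ idealOfVars σ k)
    (hnil : ∀ i, IsNilpotent (Ideal.Quotient.mk I (X i)))
    {φ : (MvPolynomial σ k ⧸ I) →ₐ[k] (MvPolynomial σ k ⧸ I)} {P : σ → MvPolynomial σ k}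
    (hP : ∀ i, Ideal.Quotient.mk I (P i) = φ (Ideal.Quotient.mk I (X i))) (l : σ) :
    Ideal.Quotient.mkₐ k (varsIdeal I ^ 2) (φ (Ideal.Quotient.mk I (X l))) =
      ∑ j, linearCoeffMatrix P l j •
        Ideal.Quotient.mkₐ k (varsIdeal I ^ 2) (Ideal.Quotient.mk I (X j)) := by
  have hPl : constantCoeff (P l) = 0 := by
    rw [← mk_mem_varsIdeal_iff hI, hP l]
    exact varsIdeal_le_comap hnil hI φ (Ideal.subset_span ⟨l, rfl⟩)
  rw [← hP l, mkₐ_sq_mk_eq_sum hPl]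
  simp

variable [DecidableEq σ]

theorem isUnit_linearCoeffMatrix_of_surjective (hI : I ≤ idealOfVars σ k ^ 2)
    (hnil : ∀ i, IsNilpotent (Ideal.Quotient.mk I (X i)))
    {φ : (MvPolynomial σ k ⧸ I) →ₐ[k] (MvPolynomial σ k ⧸ I)} {P : σ → MvPolynomial σ k}
    (hP : ∀ i, Ideal.Quotient.mk I (P i) = φ (Ideal.Quotient.mk I (X i)))
    (hφ : Function.Surjective φ) : IsUnit (linearCoeffMatrix P) := by
  have hI₁ : I ≤ idealOfVars σ k := hI.trans (Ideal.pow_le_self two_ne_zero)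
  let φ₂ := Ideal.quotientMapₐ (varsIdeal I ^ 2) φ fun _ =>
    Ideal.map_mem_pow_of_le_comap (varsIdeal_le_comap hnil hI₁ φ)
  have hφ₂ (a) : φ₂ (Ideal.Quotient.mkₐ k _ a) = Ideal.Quotient.mkₐ k _ (φ a) := rfl
  obtain ⟨Q, hQ⟩ : ∃ Q : σ → MvPolynomial σ k,
      ∀ i, φ (Ideal.Quotient.mk I (Q i)) = Ideal.Quotient.mk I (X i) := by
    choose a ha using fun i => hφ (Ideal.Quotient.mk I (X i))
    choose Q hQ using fun i => Ideal.Quotient.mk_surjective (a i)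
    exact ⟨Q, fun i => (hQ i).symm ▸ ha i⟩
  have hQ0 (i) : constantCoeff (Q i) = 0 := by
    rw [← augmentation_mk hI₁, ← augmentation_comp hnil hI₁ φ, AlgHom.comp_apply, hQ i,
      augmentation_mk, constantCoeff_X]
  have hQP : linearCoeffMatrix Q * linearCoeffMatrix P = 1 := by
    ext i j
    refine Fintype.linearIndependent_iffₛ.mp (linearIndependent_mkₐ_sq hI) _ _ ?_ j
    calc ∑ j, (linearCoeffMatrix Q * linearCoeffMatrix P) i j •
          Ideal.Quotient.mkₐ k (varsIdeal I ^ 2) (Ideal.Quotient.mk I (X j))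
        = ∑ l, linearCoeffMatrix Q i l •
          Ideal.Quotient.mkₐ k (varsIdeal I ^ 2) (φ (Ideal.Quotient.mk I (X l))) := by
          simp only [mkₐ_sq_map_X hI₁ hnil hP, Matrix.sum_smul_sum_smul]
      _ = φ₂ (Ideal.Quotient.mkₐ k (varsIdeal I ^ 2) (Ideal.Quotient.mk I (Q i))) := by
          simp only [mkₐ_sq_mk_eq_sum (hQ0 i), map_sum, map_smul, hφ₂, linearCoeffMatrix_apply]
      _ = ∑ j, (1 : Matrix σ σ k) i j •
          Ideal.Quotient.mkₐ k (varsIdeal I ^ 2) (Ideal.Quotient.mk I (X j)) := by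
          rw [hφ₂, hQ]
          simp [Matrix.one_apply]
  exact (Matrix.isUnit_iff_isUnit_det _).mpr (Matrix.isUnit_det_of_left_inverse hQP)

theorem surjective_of_isUnit_linearCoeffMatrix (hI : I ≤ idealOfVars σ k)
    (hnil : ∀ i, IsNilpotent (Ideal.Quotient.mk I (X i)))
    {φ : (MvPolynomial σ k ⧸ I) →ₐ[k] (MvPolynomial σ k ⧸ I)} {P : σ → MvPolynomial σ k}
    (hP : ∀ i, Ideal.Quotient.mk I (P i) = φ (Ideal.Quotient.mk I (X i)))
    (hJ : IsUnit (linearCoeffMatrix P)) : Function.Surjective φ := by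
  have hφ := varsIdeal_le_comap hnil hI φ
  set N := (linearCoeffMatrix P)⁻¹
  have hNP : N * linearCoeffMatrix P = 1 :=
    Matrix.nonsing_inv_mul _ ((Matrix.isUnit_iff_isUnit_det _).mp hJ)
  have h0 (a : MvPolynomial σ k ⧸ I) : LiftsModPow φ (varsIdeal I) 0 a := by
    refine ⟨algebraMap k _ (augmentation hI a), by simp, ?_⟩
    rw [zero_add, pow_one, ← ker_augmentation hI, RingHom.mem_ker]
    simp
  refine surjective_of_liftsModPow (isNilpotent_varsIdeal hnil) hφ h0 fun a ha =>
    liftsModPow_one_of_mem_span (s := Set.range fun i => Ideal.Quotient.mk I (X i)) hφ h0 ?_ ha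
  rintro _ ⟨i, rfl⟩
  refine ⟨∑ l, N i l • Ideal.Quotient.mk I (X l), ?_, ?_⟩
  · rw [pow_one]
    exact sum_mem fun l _ => Submodule.smul_of_tower_mem _ _ (Ideal.subset_span ⟨l, rfl⟩)
  rw [one_add_one_eq_two, ← Ideal.Quotient.eq_zero_iff_mem, ← Ideal.Quotient.mkₐ_eq_mk k,
    map_sub, sub_eq_zero]
  calc _ = ∑ j, (N * linearCoeffMatrix P) i j •
        Ideal.Quotient.mkₐ k (varsIdeal I ^ 2) (Ideal.Quotient.mk I (X j)) := by
        simp [hNP, Matrix.one_apply]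
    _ = _ := by
        simp only [← Matrix.sum_smul_sum_smul, ← mkₐ_sq_map_X hI hnil hP, map_sum, map_smul]

theorem isUnit_det_jacobian_iff (hI : I ≤ idealOfVars σ k)
    (hnil : ∀ i, IsNilpotent (Ideal.Quotient.mk I (X i))) (P : σ → MvPolynomial σ k) :
    IsUnit (Matrix.of fun i j => Ideal.Quotient.mk I (pderiv j (P i))).det ↔
      IsUnit (linearCoeffMatrix P) := by
  have hJ : (Matrix.of fun i j => Ideal.Quotient.mk I (pderiv j (P i))) =
      (Ideal.Quotient.mk I).mapMatrix (Matrix.of fun i j => pderiv j (P i)) := rfl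
  have hJ₀ : constantCoeff.mapMatrix (Matrix.of fun i j => pderiv j (P i)) =
      linearCoeffMatrix P := by
    ext i j
    simp [constantCoeff_pderiv]
  rw [Matrix.isUnit_iff_isUnit_det, isUnit_iff_ne_zero, hJ, ← RingHom.map_det,
    isUnit_mk_iff hnil hI, RingHom.map_det, hJ₀]

theorem bijective_iff_isUnit_det_jacobian (hI : I ≤ idealOfVars σ k ^ 2)
    (hnil : ∀ i, IsNilpotent (Ideal.Quotient.mk I (X i)))
    {φ : (MvPolynomial σ k ⧸ I) →ₐ[k] (MvPolynomial σ k ⧸ I)} {P : σ → MvPolynomial σ k}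
    (hP : ∀ i, Ideal.Quotient.mk I (P i) = φ (Ideal.Quotient.mk I (X i))) :
    Function.Bijective φ ↔
      IsUnit (Matrix.of fun i j => Ideal.Quotient.mk I (pderiv j (P i))).det := by
  have hI₁ : I ≤ idealOfVars σ k := hI.trans (Ideal.pow_le_self two_ne_zero)
  rw [isUnit_det_jacobian_iff hI₁ hnil]
  exact ⟨fun h => isUnit_linearCoeffMatrix_of_surjective hI hnil hP h.2, fun h =>
    bijective_of_surjective hnil hI₁ (surjective_of_isUnit_linearCoeffMatrix hI₁ hnil hP h)⟩

end Cotangent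

end JacobianCriterion

open JacobianCriterion in
theorem stmt_0_general (k : Type*) [Field k] (p : ℕ) [Fact p.Prime]
    (n : ℕ) (I : Ideal (MvPolynomial (Fin n) k))
    (hI : I = Ideal.span (Set.range fun i : Fin n => (X i : MvPolynomial (Fin n) k) ^ p))
    (φ : (MvPolynomial (Fin n) k ⧸ I) →ₐ[k] (MvPolynomial (Fin n) k ⧸ I)) :
    Function.Bijective φ ↔
      ((∀ f ∈ Ideal.span (Set.range fun i : Fin n => Ideal.Quotient.mk I (X i)),
          φ f ∈ Ideal.span (Set.range fun i : Fin n => Ideal.Quotient.mk I (X i))) ∧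
        ∀ P : Fin n → MvPolynomial (Fin n) k,
          (∀ i, Ideal.Quotient.mk I (P i) = φ (Ideal.Quotient.mk I (X i))) →
          IsUnit (Matrix.det
            (Matrix.of fun i j : Fin n => Ideal.Quotient.mk I (pderiv j (P i))))) := by
  have hsq : I ≤ idealOfVars (Fin n) k ^ 2 := by
    rw [hI, Ideal.span_le]
    rintro _ ⟨i, rfl⟩
    exact Ideal.pow_le_pow_right (Fact.out : p.Prime).two_le
      (Ideal.pow_mem_pow (Ideal.subset_span (Set.mem_range_self i)) p)
  have hnil (i : Fin n) : IsNilpotent (Ideal.Quotient.mk I (X i)) :=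
    ⟨p, by rw [← map_pow, Ideal.Quotient.eq_zero_iff_mem, hI]; exact Ideal.subset_span ⟨i, rfl⟩⟩
  have hstable := varsIdeal_le_comap hnil (hsq.trans (Ideal.pow_le_self two_ne_zero)) φ
  choose P₀ hP₀ using fun i => Ideal.Quotient.mk_surjective (φ (Ideal.Quotient.mk I (X i)))
  exact ⟨fun h => ⟨hstable, fun P hP => (bijective_iff_isUnit_det_jacobian hsq hnil hP).mp h⟩,
    fun h => (bijective_iff_isUnit_det_jacobian hsq hnil hP₀).mpr (h.2 P₀ hP₀)⟩

/-- Over an algebraically closed field `k` of characteristic `p > 0`, a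
`k`-algebra endomorphism `φ` of the truncated polynomial ring
`A(n) = k[x₁,…,xₙ]/(x₁^p,…,xₙ^p)` is an automorphism iff it stabilizes the unique maximal
ideal (generated by the images of the variables) and the determinant of its Jacobian
matrix is invertible in `A(n)`. -/
theorem stmt_0 (k : Type*) [Field k] [IsAlgClosed k] (p : ℕ) [Fact p.Prime] [CharP k p]
    (n : ℕ) (I : Ideal (MvPolynomial (Fin n) k))
    (hI : I = Ideal.span (Set.range fun i : Fin n => (X i : MvPolynomial (Fin n) k) ^ p))
    (φ : (MvPolynomial (Fin n) k ⧸ I) →ₐ[k] (MvPolynomial (Fin n) k ⧸ I)) :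
    Function.Bijective φ ↔
      ((∀ f ∈ Ideal.span (Set.range fun i : Fin n => Ideal.Quotient.mk I (X i)),
          φ f ∈ Ideal.span (Set.range fun i : Fin n => Ideal.Quotient.mk I (X i))) ∧
        ∀ P : Fin n → MvPolynomial (Fin n) k,
          (∀ i, Ideal.Quotient.mk I (P i) = φ (Ideal.Quotient.mk I (X i))) →
          IsUnit (Matrix.det
            (Matrix.of fun i j : Fin n => Ideal.Quotient.mk I (pderiv j (P i))))) :=
  stmt_0_general k p n I hI φ
end

section
/- Let k be a field of characteristic p > 0 and R_s = k[x_1,...,x_n]/⟨x_1^p,...,x_n^p⟩^{p^{s-1}}. A k-algebra endomorphism σ of R_s is an automorphism if and only if σ preserves the ideal m̄ generated by the images of x_1,...,x_n and det(J(σ)) is invertible in R_s. -/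
/-!
Write `A = k[x] ⧸ I` and `m̄` for the ideal of the `x̄ᵢ`. It is the kernel of evaluation at the
origin `A → k` and it is nilpotent, so every endomorphism of `A` preserves it.

If `σ` is onto, pick `Qᵢ` with `σ(Q̄ᵢ) = x̄ᵢ`, so that `Qᵢ(P) ≡ xᵢ` modulo `I`. As `I` is generated
by `p`-th powers it is stable under every `∂/∂xⱼ`, and the chain rule gives
`(∂Q/∂x)(P) · J(σ) ≡ 1`.

Conversely, evaluating `J(σ)` at the origin gives the linear part `a` of `σ`, which is therefore
invertible: `σ(x̄ᵢ) ≡ ∑ₗ aᵢₗ x̄ₗ` modulo `m̄²`, so each `x̄ⱼ` lies in the image of `σ` modulo `m̄²`.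
Since `m̄` is nilpotent, `σ` is onto, and a surjective endomorphism of a Noetherian ring is
injective.
-/

open MvPolynomial

namespace Derivation

variable {R A : Type*} [CommSemiring R] [CommRing A] [Algebra R A] (D : Derivation R A A)

theorem map_mem_span_of_forall_mem {S : Set A} (hS : ∀ s ∈ S, D s ∈ Ideal.span S) {x : A}
    (hx : x ∈ Ideal.span S) : D x ∈ Ideal.span S := by
  induction hx using Submodule.span_induction with
  | mem s hs => exact hS s hs
  | zero => simp
  | add x y _ _ hx hy => rw [map_add]; exact add_mem hx hy
  | smul a x hx hDx =>
    rw [smul_eq_mul, leibniz, smul_eq_mul, smul_eq_mul]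
    exact add_mem (Ideal.mul_mem_left _ _ hDx) (Ideal.mul_mem_right _ _ hx)

theorem map_mem_pow_of_forall_mem {J : Ideal A} (hJ : ∀ x ∈ J, D x ∈ J) (e : ℕ) {x : A}
    (hx : x ∈ J ^ e) : D x ∈ J ^ e := by
  induction e generalizing x with
  | zero => simp
  | succ e ih =>
    rw [pow_succ] at hx ⊢
    refine Submodule.mul_induction_on hx (fun a ha b hb => ?_) fun x y hx hy => ?_
    · rw [leibniz, smul_eq_mul, smul_eq_mul, mul_comm b]
      exact add_mem (Ideal.mul_mem_mul ha (hJ b hb)) (Ideal.mul_mem_mul (ih ha) hb)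
    · rw [map_add]; exact add_mem hx hy

end Derivation

theorem IsNoetherianRing.injective_of_surjective_endomorphism {A : Type*} [CommRing A]
    [IsNoetherianRing A] (f : A →+* A) (hf : Function.Surjective f) : Function.Injective f := by
  obtain ⟨N, hN⟩ := monotone_stabilizes_iff_noetherian.mpr (inferInstance : IsNoetherian A A)
    ⟨fun m => RingHom.ker (f ^ m), fun a b hab x hx => by
      simp only [RingHom.mem_ker, RingHom.coe_pow] at hx ⊢
      rw [← Nat.sub_add_cancel hab, Function.iterate_add_apply, hx, iterate_map_zero]⟩
  refine (injective_iff_map_eq_zero f).mpr fun x hx => ?_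
  obtain ⟨y, rfl⟩ : ∃ y, (f ^ N) y = x := by rw [RingHom.coe_pow]; exact hf.iterate N x
  have hy : y ∈ RingHom.ker (f ^ (N + 1)) := by
    rwa [RingHom.mem_ker, RingHom.coe_pow, Function.iterate_succ_apply', ← RingHom.coe_pow]
  have hker : RingHom.ker (f ^ N) = RingHom.ker (f ^ (N + 1)) := hN (N + 1) N.le_succ
  rwa [← hker, RingHom.mem_ker] at hy

open Matrix in
theorem Matrix.sub_mulVec_mem_of_mul_eq_one {A ι : Type*} [CommRing A] [Fintype ι]
    [DecidableEq ι] {K : Ideal A} {a b : Matrix ι ι A} (hba : b * a = 1) {g u : ι → A}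
    (h : ∀ i, (u - a *ᵥ g) i ∈ K) (j : ι) : (g - b *ᵥ u) j ∈ K := by
  have : g - b *ᵥ u = -(b *ᵥ (u - a *ᵥ g)) := by
    rw [mulVec_sub, mulVec_mulVec, hba, one_mulVec, neg_sub]
  rw [this, Pi.neg_apply, neg_mem_iff]
  exact Ideal.sum_mem _ fun i _ => Ideal.mul_mem_left _ _ (h i)

namespace AlgHom

variable {R A ι : Type*} [CommRing R] [CommRing A] [Algebra R A] (σ : A →ₐ[R] A) {J : Ideal A}

theorem exists_sub_mem_span_sq {g : ι → A}
    (hA : ∀ r : A, ∃ c : R, r - algebraMap R A c ∈ Ideal.span (Set.range g))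
    (hg : ∀ i, ∃ y, g i - σ y ∈ Ideal.span (Set.range g) ^ 2) {x : A}
    (hx : x ∈ Ideal.span (Set.range g)) : ∃ y, x - σ y ∈ Ideal.span (Set.range g) ^ 2 := by
  induction hx using Submodule.span_induction with
  | mem x hx =>
    obtain ⟨i, rfl⟩ := hx
    exact hg i
  | zero => exact ⟨0, by simp⟩
  | add x₁ x₂ _ _ h₁ h₂ =>
    obtain ⟨y₁, hy₁⟩ := h₁
    obtain ⟨y₂, hy₂⟩ := h₂
    exact ⟨y₁ + y₂, by convert add_mem hy₁ hy₂ using 1; rw [map_add]; ring⟩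
  | smul r x hx h =>
    obtain ⟨y, hy⟩ := h
    obtain ⟨c, hc⟩ := hA r
    refine ⟨algebraMap R A c * y, ?_⟩
    have : r • x - σ (algebraMap R A c * y) =
        algebraMap R A c * (x - σ y) + (r - algebraMap R A c) * x := by
      rw [map_mul, AlgHom.commutes, smul_eq_mul]; ring
    rw [this]
    refine add_mem (Ideal.mul_mem_left _ _ hy) ?_
    rw [sq]
    exact Ideal.mul_mem_mul hc hx

theorem exists_sub_mem_pow_succ (hA : ∀ r : A, ∃ c : R, r - algebraMap R A c ∈ J)
    (hJ : ∀ x ∈ J, ∃ y, x - σ y ∈ J ^ 2) (t : ℕ) {x : A} (hx : x ∈ J ^ t) :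
    ∃ y, x - σ y ∈ J ^ (t + 1) := by
  induction t generalizing x with
  | zero =>
    obtain ⟨c, hc⟩ := hA x
    exact ⟨algebraMap R A c, by simpa using hc⟩
  | succ t ih =>
    rw [pow_succ] at hx
    refine Submodule.mul_induction_on hx (fun a ha b hb => ?_) fun x₁ x₂ h₁ h₂ => ?_
    · obtain ⟨y, hy⟩ := ih ha
      obtain ⟨z, hz⟩ := hJ b hb
      refine ⟨y * z, ?_⟩
      have hσy : σ y ∈ J ^ t := by
        simpa using sub_mem ha (Ideal.pow_le_pow_right t.le_succ hy)
      have : a * b - σ (y * z) = (a - σ y) * b + σ y * (b - σ z) := by rw [map_mul]; ring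
      rw [this]
      refine add_mem ?_ ?_
      · simpa [pow_succ] using Ideal.mul_mem_mul hy hb
      · simpa [pow_add, pow_succ, mul_assoc] using Ideal.mul_mem_mul hσy hz
    · obtain ⟨y₁, hy₁⟩ := h₁
      obtain ⟨y₂, hy₂⟩ := h₂
      exact ⟨y₁ + y₂, by convert add_mem hy₁ hy₂ using 1; rw [map_add]; ring⟩

theorem surjective_of_isNilpotent (hA : ∀ r : A, ∃ c : R, r - algebraMap R A c ∈ J)
    (hJ : ∀ x ∈ J, ∃ y, x - σ y ∈ J ^ 2) (hnil : IsNilpotent J) : Function.Surjective σ := by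
  obtain ⟨N, hN⟩ := hnil
  suffices h : ∀ d t, t + d = N → ∀ x ∈ J ^ t, x ∈ σ.range by
    exact fun x => h N 0 (zero_add N) x (by simp)
  intro d
  induction d with
  | zero =>
    rintro t rfl x hx
    rw [add_zero] at hN
    rw [hN, Ideal.zero_eq_bot, Ideal.mem_bot] at hx
    exact hx ▸ zero_mem _
  | succ d ih =>
    intro t ht x hx
    obtain ⟨y, hy⟩ := σ.exists_sub_mem_pow_succ hA hJ t hx
    simpa using add_mem (ih (t + 1) (by omega) _ hy) (σ.mem_range_self y)

end AlgHom

theorem Finsupp.eq_zero_or_eq_single_one_of_degree_lt_two {ι : Type*} {d : ι →₀ ℕ}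
    (hd : d.degree < 2) : d = 0 ∨ ∃ j, d = Finsupp.single j 1 := by
  rcases eq_or_ne d 0 with h | h
  · exact .inl h
  obtain ⟨j, hj⟩ := Finsupp.ne_iff.mp h
  have hle : Finsupp.single j 1 ≤ d := Finsupp.single_le_iff.mpr (Nat.one_le_iff_ne_zero.mpr hj)
  have hdeg := map_add Finsupp.degree (Finsupp.single j 1) (d - Finsupp.single j 1)
  rw [add_tsub_cancel_of_le hle, Finsupp.degree_single] at hdeg
  refine .inr ⟨j, ?_⟩
  rw [← add_tsub_cancel_of_le hle,
    (Finsupp.degree_eq_zero_iff (d - Finsupp.single j 1)).mp (by omega), add_zero]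

namespace MvPolynomial

variable {R : Type*} [CommRing R] {ι κ : Type*}

theorem pderiv_aeval [Fintype ι] (f : ι → MvPolynomial κ R) (φ : MvPolynomial ι R) (j : κ) :
    pderiv j (aeval f φ) = ∑ i, aeval f (pderiv i φ) * pderiv j (f i) := by
  classical
  induction φ using MvPolynomial.induction_on with
  | C a => simp
  | add u v hu hv => simp only [map_add, hu, hv, add_mul, Finset.sum_add_distrib]
  | mul_X u i hu =>
    rw [map_mul, aeval_X, Derivation.leibniz, hu, smul_eq_mul, smul_eq_mul]
    simp only [Derivation.leibniz, pderiv_X, smul_eq_mul, map_add, map_mul, aeval_X, add_mul,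
      Finset.sum_add_distrib, Pi.single_apply, mul_ite, mul_one, mul_zero, apply_ite (aeval f),
      map_zero, ite_mul, zero_mul, Finset.sum_ite_eq, Finset.mem_univ, if_true, Finset.mul_sum,
      mul_assoc]

theorem pderiv_mem_span_X_pow_pow (p : ℕ) [CharP R p] (e : ℕ) (j : ι) {f : MvPolynomial ι R}
    (hf : f ∈ Ideal.span (Set.range fun i => (X i : MvPolynomial ι R) ^ p) ^ e) :
    pderiv j f ∈ Ideal.span (Set.range fun i => (X i : MvPolynomial ι R) ^ p) ^ e := by
  refine (pderiv j).map_mem_pow_of_forall_mem (fun g hg => ?_) e hf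
  refine (pderiv j).map_mem_span_of_forall_mem ?_ hg
  rintro _ ⟨i, rfl⟩
  simp [Derivation.leibniz_pow, CharP.cast_eq_zero]

theorem idealOfVars_eq_ker_constantCoeff :
    idealOfVars ι R = RingHom.ker (constantCoeff : MvPolynomial ι R →+* R) := by
  ext f
  rw [← pow_one (idealOfVars ι R), mem_pow_idealOfVars_iff', RingHom.mem_ker, constantCoeff_eq]
  simp [Finsupp.degree_eq_zero_iff]

theorem sub_linearPart_mem_idealOfVars_sq [Fintype ι] (f : MvPolynomial ι R) :
    f - C (constantCoeff f) - ∑ l, C (coeff (Finsupp.single l 1) f) * X l ∈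
      idealOfVars ι R ^ 2 := by
  classical
  rw [mem_pow_idealOfVars_iff']
  intro d hd
  rcases Finsupp.eq_zero_or_eq_single_one_of_degree_lt_two hd with rfl | ⟨j, rfl⟩
  · simp [coeff_sum, coeff_X, constantCoeff_eq]
  · simp [coeff_sum, coeff_X, Finsupp.single_eq_single_iff, eq_comm (a := (0 : ι →₀ ℕ))]

variable {I : Ideal (MvPolynomial ι R)}

theorem _root_.AlgHom.apply_mk_eq_mk_aeval
    (σ : (MvPolynomial ι R ⧸ I) →ₐ[R] (MvPolynomial ι R ⧸ I)) {P : ι → MvPolynomial ι R}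
    (hP : ∀ i, Ideal.Quotient.mk I (P i) = σ (Ideal.Quotient.mk I (X i)))
    (f : MvPolynomial ι R) :
    σ (Ideal.Quotient.mk I f) = Ideal.Quotient.mk I (aeval P f) := by
  have h : σ.comp (Ideal.Quotient.mkₐ R I) = (Ideal.Quotient.mkₐ R I).comp (aeval P) :=
    algHom_ext fun i => by simp [hP i]
  simpa using AlgHom.congr_fun h f

theorem isUnit_det_jacobian_of_surjective [Fintype ι] [DecidableEq ι]
    (hI : ∀ j, ∀ f ∈ I, pderiv j f ∈ I)
    {σ : (MvPolynomial ι R ⧸ I) →ₐ[R] (MvPolynomial ι R ⧸ I)} (hσ : Function.Surjective σ)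
    {P : ι → MvPolynomial ι R}
    (hP : ∀ i, Ideal.Quotient.mk I (P i) = σ (Ideal.Quotient.mk I (X i))) :
    IsUnit (Matrix.of fun i j => Ideal.Quotient.mk I (pderiv j (P i))).det := by
  choose Q hQ using fun i => (hσ.comp Ideal.Quotient.mk_surjective) (Ideal.Quotient.mk I (X i))
  have hPQ (i j : ι) : Ideal.Quotient.mk I (pderiv j (aeval P (Q i))) =
      Ideal.Quotient.mk I (pderiv j (X i)) := by
    refine Ideal.Quotient.eq.mpr ?_
    rw [← map_sub]
    refine hI j _ (Ideal.Quotient.eq.mp ?_)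
    rw [← σ.apply_mk_eq_mk_aeval hP, ← hQ, Function.comp_apply]
  refine Matrix.isUnit_det_of_left_inverse
    (B := Matrix.of fun i l => Ideal.Quotient.mk I (aeval P (pderiv l (Q i)))) (Matrix.ext ?_)
  intro i j
  have := hPQ i j
  rw [pderiv_aeval, pderiv_X, map_sum] at this
  simpa [Matrix.mul_apply, Matrix.one_apply, Pi.single_apply, eq_comm] using this

theorem span_range_mk_X_eq_map :
    Ideal.span (Set.range fun i => Ideal.Quotient.mk I (X i)) =
      (idealOfVars ι R).map (Ideal.Quotient.mk I) := by
  rw [idealOfVars, Ideal.map_span, ← Set.range_comp]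
  rfl

noncomputable def quotientEvalZero (hI : I ≤ RingHom.ker constantCoeff) :
    MvPolynomial ι R ⧸ I →+* R :=
  Ideal.Quotient.lift I constantCoeff hI

theorem quotientEvalZero_mk (hI : I ≤ RingHom.ker constantCoeff) (f : MvPolynomial ι R) :
    quotientEvalZero hI (Ideal.Quotient.mk I f) = constantCoeff f := rfl

theorem quotientEvalZero_algebraMap (hI : I ≤ RingHom.ker constantCoeff) (c : R) :
    quotientEvalZero hI (algebraMap R (MvPolynomial ι R ⧸ I) c) = c := by
  rw [← Ideal.Quotient.mk_algebraMap, quotientEvalZero_mk, algebraMap_eq, constantCoeff_C]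

theorem ker_quotientEvalZero (hI : I ≤ RingHom.ker constantCoeff) :
    RingHom.ker (quotientEvalZero hI) =
      Ideal.span (Set.range fun i => Ideal.Quotient.mk I (X i)) := by
  rw [quotientEvalZero, Ideal.ker_quotient_lift, ← idealOfVars_eq_ker_constantCoeff,
    span_range_mk_X_eq_map]

theorem sub_algebraMap_quotientEvalZero_mem (hI : I ≤ RingHom.ker constantCoeff)
    (r : MvPolynomial ι R ⧸ I) :
    r - algebraMap R _ (quotientEvalZero hI r) ∈
      Ideal.span (Set.range fun i => Ideal.Quotient.mk I (X i)) := by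
  rw [← ker_quotientEvalZero hI, RingHom.mem_ker, map_sub, quotientEvalZero_algebraMap, sub_self]

theorem mem_span_range_mk_X_of_isNilpotent [IsReduced R] (hI : I ≤ RingHom.ker constantCoeff)
    {r : MvPolynomial ι R ⧸ I} (hr : IsNilpotent r) :
    r ∈ Ideal.span (Set.range fun i => Ideal.Quotient.mk I (X i)) := by
  rw [← ker_quotientEvalZero hI, RingHom.mem_ker]
  exact (hr.map _).eq_zero

theorem span_range_mk_X_le_nilradical (hX : ∀ i, ∃ N, (X i : MvPolynomial ι R) ^ N ∈ I) :
    Ideal.span (Set.range fun i => Ideal.Quotient.mk I (X i)) ≤ nilradical _ := by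
  rw [Ideal.span_le]
  rintro _ ⟨i, rfl⟩
  obtain ⟨N, hN⟩ := hX i
  exact mem_nilradical.mpr ⟨N, by rw [← map_pow, Ideal.Quotient.eq_zero_iff_mem]; exact hN⟩

theorem isNilpotent_span_range_mk_X [Finite ι]
    (hX : ∀ i, ∃ N, (X i : MvPolynomial ι R) ^ N ∈ I) :
    IsNilpotent (Ideal.span (Set.range fun i => Ideal.Quotient.mk I (X i))) :=
  (Ideal.FG.isNilpotent_iff_le_nilradical (Submodule.fg_span (Set.finite_range _))).mpr
    (span_range_mk_X_le_nilradical hX)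

open Matrix in
theorem bijective_of_isUnit_det_jacobian [Fintype ι] [DecidableEq ι] [IsNoetherianRing R]
    (hI : I ≤ RingHom.ker constantCoeff) (hX : ∀ i, ∃ N, (X i : MvPolynomial ι R) ^ N ∈ I)
    {σ : (MvPolynomial ι R ⧸ I) →ₐ[R] (MvPolynomial ι R ⧸ I)}
    (hσ : ∀ i, σ (Ideal.Quotient.mk I (X i)) ∈
      Ideal.span (Set.range fun i => Ideal.Quotient.mk I (X i)))
    {P : ι → MvPolynomial ι R}
    (hP : ∀ i, Ideal.Quotient.mk I (P i) = σ (Ideal.Quotient.mk I (X i)))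
    (hdet : IsUnit (Matrix.of fun i j => Ideal.Quotient.mk I (pderiv j (P i))).det) :
    Function.Bijective σ := by
  set m := Ideal.span (Set.range fun i => Ideal.Quotient.mk I (X i))
  set x : ι → MvPolynomial ι R ⧸ I := fun i => Ideal.Quotient.mk I (X i)
  set a : Matrix ι ι R := Matrix.of fun i l => coeff (Finsupp.single l 1) (P i)
  have ha : IsUnit a.det := by
    have := hdet.map (quotientEvalZero hI)
    rw [RingHom.map_det] at this
    convert this
    ext i l
    simp [a, quotientEvalZero_mk, constantCoeff_eq, coeff_pderiv]
  have hlin : ∀ i, ((fun i => σ (x i)) - (algebraMap R _).mapMatrix a *ᵥ x) i ∈ m ^ 2 := by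
    intro i
    have hcc : constantCoeff (P i) = 0 := by
      rw [← quotientEvalZero_mk hI, hP i, ← RingHom.mem_ker, ker_quotientEvalZero]
      exact hσ i
    have heq : ((fun i => σ (x i)) - (algebraMap R _).mapMatrix a *ᵥ x) i =
        Ideal.Quotient.mk I
          (P i - C (constantCoeff (P i)) - ∑ l, C (coeff (Finsupp.single l 1) (P i)) * X l) := by
      simp only [Pi.sub_apply, mulVec, dotProduct, RingHom.mapMatrix_apply, map_apply,
        map_sub, map_sum, map_mul, hcc, map_zero, sub_zero, hP, x, a, of_apply,
        ← algebraMap_eq, Ideal.Quotient.mk_algebraMap]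
    rw [heq, show m = _ from span_range_mk_X_eq_map, ← Ideal.map_pow]
    exact Ideal.mem_map_of_mem _ (sub_linearPart_mem_idealOfVars_sq (P i))
  have hgen (j : ι) : ∃ y, x j - σ y ∈ m ^ 2 := by
    refine ⟨((algebraMap R _).mapMatrix a⁻¹ *ᵥ x) j, ?_⟩
    have := Matrix.sub_mulVec_mem_of_mul_eq_one
      (by rw [← map_mul, Matrix.nonsing_inv_mul _ ha, map_one]) hlin j
    convert this using 2
    simp [mulVec, dotProduct, map_sum]
  have hA (r : MvPolynomial ι R ⧸ I) : ∃ c, r - algebraMap R _ c ∈ m :=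
    ⟨_, sub_algebraMap_quotientEvalZero_mem hI r⟩
  have hsurj := σ.surjective_of_isNilpotent hA (fun _ hy => σ.exists_sub_mem_span_sq hA hgen hy)
    (isNilpotent_span_range_mk_X hX)
  exact ⟨IsNoetherianRing.injective_of_surjective_endomorphism σ.toRingHom hsurj, hsurj⟩

end MvPolynomial

theorem stmt_3_general (k : Type*) [Field k] (p : ℕ) [Fact p.Prime] [CharP k p]
    (n s : ℕ) (I : Ideal (MvPolynomial (Fin n) k))
    (hI : I = (Ideal.span (Set.range fun i : Fin n =>
      (X i : MvPolynomial (Fin n) k) ^ p)) ^ (p ^ (s - 1)))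
    (σ : (MvPolynomial (Fin n) k ⧸ I) →ₐ[k] (MvPolynomial (Fin n) k ⧸ I)) :
    Function.Bijective σ ↔
      ((∀ f ∈ Ideal.span (Set.range fun i : Fin n => Ideal.Quotient.mk I (X i)),
          σ f ∈ Ideal.span (Set.range fun i : Fin n => Ideal.Quotient.mk I (X i))) ∧
        ∀ P : Fin n → MvPolynomial (Fin n) k,
          (∀ i, Ideal.Quotient.mk I (P i) = σ (Ideal.Quotient.mk I (X i))) →
          IsUnit (Matrix.det
            (Matrix.of fun i j : Fin n => Ideal.Quotient.mk I (pderiv j (P i))))) := by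
  have hp : p ≠ 0 := (Fact.out : p.Prime).ne_zero
  have hI₀ : I ≤ RingHom.ker constantCoeff := by
    rw [hI]
    refine (Ideal.pow_le_self (pow_ne_zero _ hp)).trans (Ideal.span_le.mpr ?_)
    rintro _ ⟨i, rfl⟩
    simp [zero_pow hp]
  have hX (i : Fin n) : ∃ N, (X i : MvPolynomial (Fin n) k) ^ N ∈ I :=
    ⟨p * p ^ (s - 1), by
      rw [hI, pow_mul]
      exact Ideal.pow_mem_pow (Ideal.subset_span (Set.mem_range_self i)) _⟩
  have hpderiv (j : Fin n) (f : MvPolynomial (Fin n) k) (hf : f ∈ I) : pderiv j f ∈ I := by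
    rw [hI] at hf ⊢
    exact pderiv_mem_span_X_pow_pow p _ j hf
  constructor
  · intro hσ
    refine ⟨fun f hf => mem_span_range_mk_X_of_isNilpotent hI₀ ?_, fun P hP =>
      isUnit_det_jacobian_of_surjective hpderiv hσ.2 hP⟩
    exact (mem_nilradical.mp (span_range_mk_X_le_nilradical hX hf)).map σ
  · rintro ⟨hm, hdet⟩
    choose P hP using fun i => Ideal.Quotient.mk_surjective (σ (Ideal.Quotient.mk I (X i)))
    exact bijective_of_isUnit_det_jacobian hI₀ hX (fun i => hm _ (Ideal.subset_span ⟨i, rfl⟩))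
      hP (hdet P hP)

/-- For `k` a field of characteristic `p > 0` and
`R_s = k[x₁,…,xₙ]/⟨x₁^p,…,xₙ^p⟩^{p^{s-1}}`, a `k`-algebra endomorphism `σ` of `R_s` is an
automorphism iff it preserves the ideal `m̄` generated by the images of the variables and
the determinant of its Jacobian matrix (via lifts) is invertible in `R_s`. -/
theorem stmt_3 (k : Type*) [Field k] (p : ℕ) [Fact p.Prime] [CharP k p]
    (n s : ℕ) (hs : 1 ≤ s) (I : Ideal (MvPolynomial (Fin n) k))
    (hI : I = (Ideal.span (Set.range fun i : Fin n =>
      (X i : MvPolynomial (Fin n) k) ^ p)) ^ (p ^ (s - 1)))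
    (σ : (MvPolynomial (Fin n) k ⧸ I) →ₐ[k] (MvPolynomial (Fin n) k ⧸ I)) :
    Function.Bijective σ ↔
      ((∀ f ∈ Ideal.span (Set.range fun i : Fin n => Ideal.Quotient.mk I (X i)),
          σ f ∈ Ideal.span (Set.range fun i : Fin n => Ideal.Quotient.mk I (X i))) ∧
        ∀ P : Fin n → MvPolynomial (Fin n) k,
          (∀ i, Ideal.Quotient.mk I (P i) = σ (Ideal.Quotient.mk I (X i))) →
          IsUnit (Matrix.det
            (Matrix.of fun i j : Fin n => Ideal.Quotient.mk I (pderiv j (P i))))) :=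
  stmt_3_general k p n s I hI σ
end

section
/- Let F be an algebraically closed field of characteristic 0 and Φ: F^n → F^n a polynomial map whose Jacobian determinant is a nonzero constant. For every point d ∈ F^n, the fiber Φ^{-1}(d) is a finite set (the variety defined by Φ_1 - d_1, ..., Φ_n - d_n has dimension zero). -/
/-!
Let `𝔪_a = ker (eval a)` be the ideal of a point `a` of the fibre and `I` the ideal generated by
the `Φᵢ - dᵢ`. First-order Taylor expansion gives `Φ - d ≡ Jac(a) · (X - a) mod 𝔪_a²`, and
`Jac(a)` is invertible, so `𝔪_a ⊆ I + 𝔪_a²`. By Nakayama some `f ∉ 𝔪_a` satisfies `f 𝔪_a ⊆ I`,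
hence `𝔪_a` is a minimal prime over `I`. A Noetherian ring has only finitely many minimal primes
over an ideal and `a ↦ 𝔪_a` is injective, so the fibre is finite.
-/

open MvPolynomial

namespace Ideal

variable {R : Type*} [CommRing R]

theorem exists_sub_one_mem_and_mul_mem_of_le_sup_sq {I J : Ideal R} (hI : I.FG)
    (h : I ≤ J ⊔ I ^ 2) : ∃ f, f - 1 ∈ I ∧ ∀ m ∈ I, f * m ∈ J := by
  set π := Quotient.mk J
  have hle : I.map π ≤ I.map π • I.map π := by
    rw [smul_eq_mul, ← sq, ← Ideal.map_pow]
    calc I.map π ≤ (J ⊔ I ^ 2).map π := map_mono h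
      _ = (I ^ 2).map π := by rw [map_sup, map_quotient_self, bot_sup_eq]
  obtain ⟨r, hr1, hr⟩ :=
    Submodule.exists_sub_one_mem_and_smul_eq_zero_of_fg_of_le_smul _ _ (hI.map π) hle
  obtain ⟨g, hg, hgr⟩ := (mem_map_iff_of_surjective π Quotient.mk_surjective).1 hr1
  refine ⟨g + 1, by simpa using hg, fun m hm => ?_⟩
  rw [← Quotient.eq_zero_iff_mem, map_mul, map_add, hgr, map_one, sub_add_cancel]
  exact hr _ (mem_map_of_mem π hm)

theorem mem_minimalPrimes_of_le_sup_sq {P J : Ideal R} [hP : P.IsPrime] (hfg : P.FG)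
    (hJP : J ≤ P) (h : P ≤ J ⊔ P ^ 2) : P ∈ J.minimalPrimes := by
  obtain ⟨f, hf1, hfJ⟩ := exists_sub_one_mem_and_mul_mem_of_le_sup_sq hfg h
  have hf : f ∉ P := fun hf => hP.ne_top <| (eq_top_iff_one P).2 <| by
    simpa using P.sub_mem hf hf1
  refine ⟨⟨hP, hJP⟩, fun q ⟨hq, hJq⟩ hqP m hm => ?_⟩
  exact (hq.mem_or_mem (hJq (hfJ m hm))).resolve_left fun hfq => hf (hqP hfq)

end Ideal

namespace Matrix

variable {R σ : Type*} [CommRing R] [Fintype σ]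

theorem mulVec_mem_of_forall_mem (I : Ideal R) (B : Matrix σ σ R) {u : σ → R}
    (hu : ∀ i, u i ∈ I) (j : σ) : (B *ᵥ u) j ∈ I :=
  Ideal.sum_mem _ fun i _ => I.mul_mem_left _ (hu i)

theorem mem_sup_of_sub_mulVec_mem [DecidableEq σ] {I J : Ideal R} {A B : Matrix σ σ R}
    (hBA : B * A = 1) {v w : σ → R} (hw : ∀ i, w i ∈ J)
    (hwv : ∀ i, w i - (A *ᵥ v) i ∈ I) (j : σ) : v j ∈ J ⊔ I := by
  have hv : v = B *ᵥ w - B *ᵥ (w - A *ᵥ v) := by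
    rw [mulVec_sub, mulVec_mulVec, hBA, one_mulVec, sub_sub_cancel]
  rw [hv]
  exact sub_mem (Ideal.mem_sup_left (mulVec_mem_of_forall_mem J B hw j))
    (Ideal.mem_sup_right (mulVec_mem_of_forall_mem I B hwv j))

end Matrix

namespace MvPolynomial

variable {σ R : Type*} [CommRing R]

theorem X_sub_C_mem_ker_eval (a : σ → R) (j : σ) : X j - C (a j) ∈ RingHom.ker (eval a) := by
  simp [RingHom.mem_ker]

theorem ker_eval_injective [Nontrivial R] :
    Function.Injective fun a : σ → R => RingHom.ker (eval a) := by
  intro a b h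
  funext j
  have := X_sub_C_mem_ker_eval a j
  simp only [h, RingHom.mem_ker, map_sub, eval_X, eval_C, sub_eq_zero] at this
  exact this.symm

variable [Fintype σ] [DecidableEq σ]

theorem sub_C_eval_sub_sum_pderiv_mem_ker_eval_sq (a : σ → R) (p : MvPolynomial σ R) :
    p - C (eval a p) - ∑ j, C (eval a (pderiv j p)) * (X j - C (a j)) ∈
      RingHom.ker (eval a) ^ 2 := by
  induction p using MvPolynomial.induction_on with
  | C r => simp
  | add p q hp hq =>
    convert Ideal.add_mem _ hp hq using 1
    simp only [map_add, add_mul, Finset.sum_add_distrib]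
    ring
  | mul_X p k hp =>
    set L := ∑ j, C (eval a (pderiv j p)) * (X j - C (a j))
    have hL : ∑ j, C (eval a (pderiv j (p * X k))) * (X j - C (a j)) =
        C (a k) * L + C (eval a p) * (X k - C (a k)) := by
      simp [pderiv_X, Pi.single_apply, add_mul, Finset.sum_add_distrib, L, Finset.mul_sum,
        mul_assoc, apply_ite C, apply_ite (eval a), ite_mul, add_comm]
    have key : p * X k - C (eval a (p * X k)) -
        ∑ j, C (eval a (pderiv j (p * X k))) * (X j - C (a j)) =
          L * (X k - C (a k)) + (p - C (eval a p) - L) * X k := by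
      rw [hL, map_mul, eval_X, map_mul]
      ring
    have hLmem : L ∈ RingHom.ker (eval a) :=
      Ideal.sum_mem _ fun j _ => Ideal.mul_mem_left _ _ (X_sub_C_mem_ker_eval a j)
    rw [key]
    exact Ideal.add_mem _ (sq (RingHom.ker (eval a)) ▸
      Ideal.mul_mem_mul hLmem (X_sub_C_mem_ker_eval a k)) (Ideal.mul_mem_right _ _ hp)

noncomputable def jacobianMatrix (Φ : σ → MvPolynomial σ R) : Matrix σ σ (MvPolynomial σ R) :=
  Matrix.of fun i j => pderiv j (Φ i)

theorem ker_eval_le_sup_sq {Φ : σ → MvPolynomial σ R} {a d : σ → R}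
    (ha : ∀ i, eval a (Φ i) = d i) (hJ : IsUnit ((jacobianMatrix Φ).map (eval a)).det) :
    RingHom.ker (eval a) ≤
      Ideal.span (Set.range fun i => Φ i - C (d i)) ⊔ RingHom.ker (eval a) ^ 2 := by
  set A := (jacobianMatrix Φ).map (eval a)
  have hX : ∀ j, X j - C (a j) ∈
      Ideal.span (Set.range fun i => Φ i - C (d i)) ⊔ RingHom.ker (eval a) ^ 2 := by
    refine Matrix.mem_sup_of_sub_mulVec_mem (A := A.map C) (B := A⁻¹.map C) ?_
      (fun i => Ideal.subset_span ⟨i, rfl⟩) fun i => ?_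
    · rw [← Matrix.map_mul, Matrix.nonsing_inv_mul A hJ, Matrix.map_one _ C.map_zero C.map_one]
    · simpa [ha i, A, jacobianMatrix, Matrix.mulVec, dotProduct] using
        sub_C_eval_sub_sum_pderiv_mem_ker_eval_sq a (Φ i)
  intro p hp
  set L := ∑ j, C (eval a (pderiv j p)) * (X j - C (a j))
  have hpL : p = (p - C (eval a p) - L) + L := by
    rw [RingHom.mem_ker.1 hp, map_zero]
    ring
  rw [hpL]
  exact Ideal.add_mem _ (Ideal.mem_sup_right (sub_C_eval_sub_sum_pderiv_mem_ker_eval_sq a p))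
    (Ideal.sum_mem _ fun j _ => Ideal.mul_mem_left _ _ (hX j))

theorem ker_eval_mem_minimalPrimes [IsDomain R] [IsNoetherianRing R] {Φ : σ → MvPolynomial σ R}
    {a d : σ → R} (ha : ∀ i, eval a (Φ i) = d i)
    (hJ : IsUnit ((jacobianMatrix Φ).map (eval a)).det) :
    RingHom.ker (eval a) ∈ (Ideal.span (Set.range fun i => Φ i - C (d i))).minimalPrimes := by
  have := RingHom.ker_isPrime (eval a)
  refine Ideal.mem_minimalPrimes_of_le_sup_sq (IsNoetherian.noetherian _) ?_
    (ker_eval_le_sup_sq ha hJ)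
  rw [Ideal.span_le]
  rintro _ ⟨i, rfl⟩
  simp [RingHom.mem_ker, ha i]

theorem finite_fiber_of_isUnit_det_jacobianMatrix [IsDomain R] [IsNoetherianRing R]
    (Φ : σ → MvPolynomial σ R) (d : σ → R)
    (hJ : ∀ a, (∀ i, eval a (Φ i) = d i) → IsUnit ((jacobianMatrix Φ).map (eval a)).det) :
    {a : σ → R | ∀ i, eval a (Φ i) = d i}.Finite :=
  ((Ideal.finite_minimalPrimes_of_isNoetherianRing _ _).subset
    (Set.image_subset_iff.2 fun a ha => ker_eval_mem_minimalPrimes ha (hJ a ha))).of_finite_image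
    ker_eval_injective.injOn

end MvPolynomial

theorem stmt_17_general (F : Type*) [Field F] (n : ℕ)
    (Φ : Fin n → MvPolynomial (Fin n) F)
    (hJ : ∃ c : F, c ≠ 0 ∧
      Matrix.det (Matrix.of fun i j : Fin n => pderiv j (Φ i)) = C c)
    (d : Fin n → F) :
    {x : Fin n → F | ∀ i, eval x (Φ i) = d i}.Finite := by
  obtain ⟨c, hc, hdet⟩ := hJ
  refine finite_fiber_of_isUnit_det_jacobianMatrix Φ d fun a _ => ?_
  rw [← RingHom.mapMatrix_apply, ← RingHom.map_det, jacobianMatrix, hdet, eval_C]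
  exact hc.isUnit

/-- For `F` algebraically closed of characteristic `0` and a polynomial map
`Φ : Fⁿ → Fⁿ` (components `Φᵢ ∈ F[x₁,…,xₙ]`) whose Jacobian determinant is a nonzero
constant, every fiber `Φ⁻¹(d)` is finite. -/
theorem stmt_17 (F : Type*) [Field F] [IsAlgClosed F] [CharZero F] (n : ℕ)
    (Φ : Fin n → MvPolynomial (Fin n) F)
    (hJ : ∃ c : F, c ≠ 0 ∧
      Matrix.det (Matrix.of fun i j : Fin n => pderiv j (Φ i)) = C c)
    (d : Fin n → F) :
    {x : Fin n → F | ∀ i, eval x (Φ i) = d i}.Finite :=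
  stmt_17_general F n Φ hJ d
end

section
/- Let k be a field of characteristic p > 0 and R_s = k[x_1,...,x_n]/⟨x_1^p,...,x_n^p⟩^{p^{s-1}} with m̄ the ideal generated by the images of the variables. Every k-algebra endomorphism σ of R_s with σ(x̄_i) = x̄_i + v_i for some v_i ∈ m̄^2 and det(J(σ)) invertible is an automorphism. -/
open MvPolynomial

/-!
Write `m` for the ideal generated by the variables of `A = k[x₁,…,xₙ]/I`. Since every
generator `xᵢ` is moved by `σ` only by an element of `m²`, the map `σ` is the identity
modulo `m` and sends `m^j` into itself while moving each element of `m^j` by an element of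
`m^(j+1)`. As `xᵢ^(p·p^(s-1)) = 0`, the finitely generated ideal `m` is nilpotent, so successive
approximation through the finite filtration `A ⊇ m ⊇ m² ⊇ ⋯ ⊇ m^N = 0` shows that `σ` is
surjective. A surjective endomorphism of a Noetherian ring is injective, because the chain
of kernels of its iterates stabilises.
-/

namespace RingHom

variable {A : Type*} [CommRing A]

theorem injective_of_surjective_of_isNoetherianRing [IsNoetherianRing A] (f : A →+* A)
    (hf : Function.Surjective f) : Function.Injective f := by
  have hmono : Monotone fun t : ℕ => ker (f ^ t) := monotone_nat_of_le_succ fun t x hx => by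
    rw [mem_ker, coe_pow, Function.iterate_succ_apply', ← coe_pow, mem_ker.mp hx, map_zero]
  obtain ⟨t, ht⟩ := monotone_stabilizes_iff_noetherian.mpr inferInstance ⟨_, hmono⟩
  have hker : ker (f ^ (t + 1)) = ker (f ^ t) := (ht (t + 1) t.le_succ).symm
  rw [injective_iff_map_eq_zero]
  intro x hx
  obtain ⟨y, rfl⟩ := hf.iterate t x
  have hy : y ∈ ker (f ^ (t + 1)) := by
    rwa [mem_ker, coe_pow, Function.iterate_succ_apply']
  rw [hker, mem_ker, coe_pow] at hy
  exact hy

variable (σ : A →+* A) (m : Ideal A)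

theorem sub_mem_sq_of_mem_span {s : Set A} (hm : Ideal.span s = m) (h₀ : ∀ a, σ a - a ∈ m)
    (hs : ∀ x ∈ s, σ x - x ∈ m ^ 2) : ∀ a ∈ m, σ a - a ∈ m ^ 2 := by
  intro a ha
  rw [← hm] at ha
  induction ha using Submodule.span_induction with
  | mem x hx => exact hs x hx
  | zero => simp
  | add a b _ _ iha ihb =>
    rw [map_add, add_sub_add_comm]
    exact add_mem iha ihb
  | smul r x hx ihx =>
    have hx : x ∈ m := hm ▸ hx
    rw [smul_eq_mul, map_mul, show σ r * σ x - r * x = σ r * (σ x - x) + (σ r - r) * x by ring]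
    exact add_mem (Ideal.mul_mem_left _ _ ihx) (sq m ▸ Ideal.mul_mem_mul (h₀ r) hx)

theorem sub_mem_pow_succ (h₀ : ∀ a, σ a - a ∈ m) (h₁ : ∀ a ∈ m, σ a - a ∈ m ^ 2) :
    ∀ j, ∀ a ∈ m ^ j, σ a - a ∈ m ^ (j + 1) := by
  intro j
  induction j with
  | zero => simpa using h₀
  | succ j ih =>
    intro a ha
    rw [pow_succ] at ha
    refine Submodule.mul_induction_on ha (fun c hc b hb => ?_) (fun x y hx hy => ?_)
    · have hσb : σ b ∈ m := by simpa using add_mem hb (h₀ b)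
      rw [map_mul, show σ c * σ b - c * b = (σ c - c) * σ b + c * (σ b - b) by ring]
      refine add_mem ?_ ?_
      · exact pow_succ m (j + 1) ▸ Ideal.mul_mem_mul (ih c hc) hσb
      · exact pow_add m j 2 ▸ Ideal.mul_mem_mul hc (h₁ b hb)
    · rw [map_add, add_sub_add_comm]
      exact add_mem hx hy

theorem surjective_of_sub_mem_pow_succ (hm : IsNilpotent m)
    (h : ∀ j, ∀ a ∈ m ^ j, σ a - a ∈ m ^ (j + 1)) : Function.Surjective σ := by
  obtain ⟨N, hN⟩ := hm
  suffices ∀ d j, j + d = N → ∀ a ∈ m ^ j, a ∈ Set.range σ from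
    fun a => this N 0 (zero_add N) a (by simp)
  intro d
  induction d with
  | zero =>
    intro j hj a ha
    rw [add_zero] at hj
    rw [hj, hN, Ideal.zero_eq_bot, Ideal.mem_bot] at ha
    exact ⟨0, by rw [map_zero, ha]⟩
  | succ d ih =>
    rintro j rfl a ha
    obtain ⟨b, hb⟩ := ih (j + 1) (by ring) _ (h j a ha)
    exact ⟨a - b, by rw [map_sub, hb, sub_sub_cancel]⟩

end RingHom

theorem AlgHom.sub_mem_of_adjoin_eq_top {R A : Type*} [CommRing R] [CommRing A] [Algebra R A]
    {s : Set A} (hs : Algebra.adjoin R s = ⊤) (σ : A →ₐ[R] A) (m : Ideal A)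
    (h : ∀ x ∈ s, σ x - x ∈ m) (a : A) : σ a - a ∈ m := by
  have hσ : (Ideal.Quotient.mkₐ R m).comp σ = Ideal.Quotient.mkₐ R m :=
    AlgHom.ext_of_adjoin_eq_top hs fun x hx => Ideal.Quotient.eq.mpr (h x hx)
  exact Ideal.Quotient.eq.mp (AlgHom.congr_fun hσ a)

namespace MvPolynomial

variable {ι k : Type*} [CommRing k]

theorem adjoin_range_mk_X (I : Ideal (MvPolynomial ι k)) :
    Algebra.adjoin k (Set.range fun i => Ideal.Quotient.mk I (X i)) = ⊤ := by
  have h : (Set.range fun i => Ideal.Quotient.mk I (X i)) =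
      Ideal.Quotient.mkₐ k I '' Set.range X := by
    rw [← Set.range_comp]; rfl
  rw [h, ← AlgHom.map_adjoin, adjoin_range_X, Algebra.map_top]
  exact (AlgHom.range_eq_top _).mpr (Ideal.Quotient.mkₐ_surjective k I)

theorem isNilpotent_span_mk_X [Finite ι] (p t : ℕ) :
    IsNilpotent (Ideal.span (Set.range fun i : ι =>
      Ideal.Quotient.mk ((Ideal.span (Set.range fun i => (X i : MvPolynomial ι k) ^ p)) ^ t)
        (X i))) := by
  refine (Ideal.FG.isNilpotent_iff_le_nilradical (Submodule.fg_span (Set.finite_range _))).mpr ?_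
  rw [Ideal.span_le]
  rintro _ ⟨i, rfl⟩
  refine mem_nilradical.mpr ⟨p * t, ?_⟩
  rw [← map_pow, Ideal.Quotient.eq_zero_iff_mem, pow_mul]
  exact Ideal.pow_mem_pow (Ideal.subset_span (Set.mem_range_self i)) t

end MvPolynomial

theorem stmt_19_general (k : Type*) [Field k] (p : ℕ)
    (n s : ℕ) (I : Ideal (MvPolynomial (Fin n) k))
    (hI : I = (Ideal.span (Set.range fun i : Fin n =>
      (X i : MvPolynomial (Fin n) k) ^ p)) ^ (p ^ (s - 1)))
    (σ : (MvPolynomial (Fin n) k ⧸ I) →ₐ[k] (MvPolynomial (Fin n) k ⧸ I))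
    (v : Fin n → (MvPolynomial (Fin n) k ⧸ I))
    (hv : ∀ i, v i ∈ (Ideal.span (Set.range fun i : Fin n =>
      Ideal.Quotient.mk I (X i))) ^ 2)
    (hσ : ∀ i, σ (Ideal.Quotient.mk I (X i)) = Ideal.Quotient.mk I (X i) + v i) :
    Function.Bijective σ := by
  set m := Ideal.span (Set.range fun i : Fin n => Ideal.Quotient.mk I (X i))
  have hm : IsNilpotent m := by
    subst hI
    exact isNilpotent_span_mk_X p _
  have hmove : ∀ i, σ (Ideal.Quotient.mk I (X i)) - Ideal.Quotient.mk I (X i) = v i :=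
    fun i => by rw [hσ, add_sub_cancel_left]
  have h₀ : ∀ a, σ a - a ∈ m :=
    σ.sub_mem_of_adjoin_eq_top (adjoin_range_mk_X _) m fun _ ⟨i, hi⟩ =>
      hi ▸ hmove i ▸ Ideal.pow_le_self two_ne_zero (hv i)
  have h₁ : ∀ a ∈ m, σ a - a ∈ m ^ 2 :=
    RingHom.sub_mem_sq_of_mem_span σ m rfl h₀ fun _ ⟨i, hi⟩ => hi ▸ hmove i ▸ hv i
  have hsurj : Function.Surjective σ :=
    RingHom.surjective_of_sub_mem_pow_succ σ m hm (RingHom.sub_mem_pow_succ σ m h₀ h₁)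
  exact ⟨RingHom.injective_of_surjective_of_isNoetherianRing σ.toRingHom hsurj, hsurj⟩

/-- For `k` a field of characteristic `p > 0` and
`R_s = k[x₁,…,xₙ]/⟨x₁^p,…,xₙ^p⟩^{p^{s-1}}` with `m̄` the ideal generated by the images of
the variables: every `k`-algebra endomorphism `σ` of `R_s` with `σ(x̄ᵢ) = x̄ᵢ + vᵢ` for
some `vᵢ ∈ m̄²`, whose Jacobian determinant (via lifts) is invertible, is an
automorphism. -/
theorem stmt_19 (k : Type*) [Field k] (p : ℕ) [Fact p.Prime] [CharP k p]
    (n s : ℕ) (hs : 1 ≤ s) (I : Ideal (MvPolynomial (Fin n) k))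
    (hI : I = (Ideal.span (Set.range fun i : Fin n =>
      (X i : MvPolynomial (Fin n) k) ^ p)) ^ (p ^ (s - 1)))
    (σ : (MvPolynomial (Fin n) k ⧸ I) →ₐ[k] (MvPolynomial (Fin n) k ⧸ I))
    (v : Fin n → (MvPolynomial (Fin n) k ⧸ I))
    (hv : ∀ i, v i ∈ (Ideal.span (Set.range fun i : Fin n =>
      Ideal.Quotient.mk I (X i))) ^ 2)
    (hσ : ∀ i, σ (Ideal.Quotient.mk I (X i)) = Ideal.Quotient.mk I (X i) + v i)
    (hJ : ∀ P : Fin n → MvPolynomial (Fin n) k,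
      (∀ i, Ideal.Quotient.mk I (P i) = σ (Ideal.Quotient.mk I (X i))) →
      IsUnit (Matrix.det
        (Matrix.of fun i j : Fin n => Ideal.Quotient.mk I (pderiv j (P i))))) :
    Function.Bijective σ :=
  stmt_19_general k p n s I hI σ v hv hσ
end
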